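/- arXiv:1507.07238 — 3 statements merged into one kernel-verified Lean document; each statement's English description precedes it below -/
import Mathlib

section
/- Let N ≥ 1, let u ∈ ℂ^N with u ≠ 0, let θ ∈ ℂ with θ ≠ 0, let σ_u ≥ 0 and σ_e > 0. For f ∈ ℂ^N define φ(f) = ∑_{i} conj(f i) * (u i) and the zeroth-order excess MSE M(f) = ((|θ|² * |φ(f) − 1|² + σ_e² * ‖f‖²) / (|θ|² * |φ(f)|² + σ_e² * ‖f‖²)) * (σ_u² + σ_e² / |θ|²). Then the MVU estimating filter f_MVU = u / ‖u‖² is a global minimizer: for every f ∈ ℂ^N with f ≠ 0, M(f_MVU) ≤ M(f); moreover M(f_MVU) = (σ_e² / (|θ|² * ‖u‖² + σ_e²)) * (σ_u² + σ_e² / |θ|²). -/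
noncomputable section

/-- `phi u f = f^H u = ∑ i, conj (f i) * u i`. -/
def phi {N : ℕ} (u f : Fin N → ℂ) : ℂ := ∑ i, (starRingEnd ℂ) (f i) * u i

/-- `nsq f = ‖f‖² = ∑ i, |f i|²`. -/
def nsq {N : ℕ} (f : Fin N → ℂ) : ℝ := ∑ i, ‖f i‖ ^ 2

/-- The zeroth-order excess MSE of the ZF input estimator, deterministic parameter. -/
def Mdet {N : ℕ} (u : Fin N → ℂ) (θ : ℂ) (σu σe : ℝ) (f : Fin N → ℂ) : ℝ :=
  ((‖θ‖ ^ 2 * ‖phi u f - 1‖ ^ 2 + σe ^ 2 * nsq f) /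
      (‖θ‖ ^ 2 * ‖phi u f‖ ^ 2 + σe ^ 2 * nsq f)) *
    (σu ^ 2 + σe ^ 2 / ‖θ‖ ^ 2)

/-- The MVU estimating filter `f_MVU = u / ‖u‖²`. -/
def fMVU {N : ℕ} (u : Fin N → ℂ) : Fin N → ℂ := fun i => u i / ((nsq u : ℝ) : ℂ)

lemma nsq_pos {N : ℕ} {f : Fin N → ℂ} (hf : f ≠ 0) : 0 < nsq f := by
  obtain ⟨i, hi⟩ := Function.ne_iff.mp hf
  refine Finset.sum_pos' (fun j _ => by positivity) ⟨i, Finset.mem_univ i, ?_⟩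
  have : ‖f i‖ ≠ 0 := by simpa using hi
  positivity

lemma cs {N : ℕ} (u f : Fin N → ℂ) :
    ‖phi u f‖ ^ 2 ≤ nsq u * nsq f := by
  have h1 : ‖phi u f‖ ≤ ∑ i, ‖f i‖ * ‖u i‖ := by
    calc ‖∑ i, (starRingEnd ℂ) (f i) * u i‖
        ≤ ∑ i, ‖(starRingEnd ℂ) (f i) * u i‖ := norm_sum_le _ _
      _ = ∑ i, ‖f i‖ * ‖u i‖ := by
          simp [norm_mul, Complex.norm_conj]
  have h2 := Finset.sum_mul_sq_le_sq_mul_sq Finset.univ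
    (fun i => ‖f i‖) (fun i => ‖u i‖)
  calc ‖phi u f‖ ^ 2
      ≤ (∑ i, ‖f i‖ * ‖u i‖) ^ 2 :=
        pow_le_pow_left₀ (norm_nonneg _) h1 2
    _ ≤ nsq f * nsq u := h2
    _ = nsq u * nsq f := mul_comm _ _

/-- Proposition 1: the MVU filter globally minimizes the deterministic zeroth-order
excess MSE of the ZF input estimator, and its value at the minimum is
`σe² / (|θ|² ‖u‖² + σe²) · (σu² + σe² / |θ|²)`. -/
theorem mvu_minimizes_det_zeroth_order_excess_mse
    (N : ℕ) (hN : 1 ≤ N) (u : Fin N → ℂ) (hu : u ≠ 0)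
    (θ : ℂ) (hθ : θ ≠ 0) (σu σe : ℝ) (hσu : 0 ≤ σu) (hσe : 0 < σe) :
    (∀ f : Fin N → ℂ, f ≠ 0 → Mdet u θ σu σe (fMVU u) ≤ Mdet u θ σu σe f) ∧
      Mdet u θ σu σe (fMVU u) =
        σe ^ 2 / (‖θ‖ ^ 2 * nsq u + σe ^ 2) *
          (σu ^ 2 + σe ^ 2 / ‖θ‖ ^ 2) := by
  have hU : 0 < nsq u := nsq_pos hu
  have hUne : ((nsq u : ℝ) : ℂ) ≠ 0 := Complex.ofReal_ne_zero.mpr hU.ne'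
  have ha : 0 < ‖θ‖ ^ 2 := by
    have : ‖θ‖ ≠ 0 := by simpa using hθ
    positivity
  set a : ℝ := ‖θ‖ ^ 2 with hadef
  set s : ℝ := σe ^ 2 with hsdef
  have hs : 0 < s := by positivity
  have hC : 0 ≤ σu ^ 2 + s / a := by positivity
  -- value of phi at fMVU
  have hUc : ((nsq u : ℝ) : ℂ) = ∑ i, (starRingEnd ℂ) (u i) * u i := by
    unfold nsq
    push_cast
    refine Finset.sum_congr rfl fun i _ => ?_
    rw [← Complex.ofReal_pow, Complex.sq_norm, Complex.normSq_eq_conj_mul_self]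
  have hphi : phi u (fMVU u) = 1 := by
    unfold phi fMVU
    have : ∀ i : Fin N, (starRingEnd ℂ) (u i / ((nsq u : ℝ) : ℂ)) * u i
        = ((starRingEnd ℂ) (u i) * u i) / ((nsq u : ℝ) : ℂ) := by
      intro i
      rw [map_div₀, Complex.conj_ofReal]
      ring
    rw [Finset.sum_congr rfl fun i _ => this i, ← Finset.sum_div, ← hUc,
      div_self hUne]
  have hnsqf : nsq (fMVU u) = 1 / nsq u := by
    unfold fMVU
    have h1 : ∀ i : Fin N, ‖u i / ((nsq u : ℝ) : ℂ)‖ ^ 2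
        = ‖u i‖ ^ 2 / nsq u ^ 2 := by
      intro i
      rw [norm_div, div_pow, Complex.norm_real, Real.norm_eq_abs, abs_of_pos hU]
    show (∑ i, ‖u i / ((nsq u : ℝ) : ℂ)‖ ^ 2) = 1 / nsq u
    rw [Finset.sum_congr rfl fun i _ => h1 i, ← Finset.sum_div]
    rw [show (∑ i, ‖u i‖ ^ 2) = nsq u from rfl]
    field_simp
  have hval : Mdet u θ σu σe (fMVU u)
      = s / (a * nsq u + s) * (σu ^ 2 + s / a) := by
    unfold Mdet
    rw [hphi, hnsqf]
    have : (a * ‖(1 : ℂ) - 1‖ ^ 2 + s * (1 / nsq u)) /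
        (a * ‖(1 : ℂ)‖ ^ 2 + s * (1 / nsq u)) = s / (a * nsq u + s) := by
      have hd1 : a * nsq u + s > 0 := by positivity
      simp only [sub_self, norm_zero, norm_one, one_pow, ne_eq]
      rw [div_eq_div_iff (by positivity : a * (1:ℝ) + s * (1 / nsq u) ≠ 0) hd1.ne']
      field_simp
      ring
    rw [this]
  refine ⟨?_, hval⟩
  intro f hf
  have hn : 0 < nsq f := nsq_pos hf
  have hCS : ‖phi u f‖ ^ 2 ≤ nsq u * nsq f := cs u f
  have hP1 : 0 ≤ ‖phi u f - 1‖ ^ 2 := by positivity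
  have hP : 0 ≤ ‖phi u f‖ ^ 2 := by positivity
  rw [hval]
  unfold Mdet
  apply mul_le_mul_of_nonneg_right _ hC
  simp only [← hadef, ← hsdef]
  rw [div_le_div_iff₀ (by positivity)
    (add_pos_of_nonneg_of_pos (mul_nonneg ha.le hP) (mul_pos hs hn))]
  nlinarith [mul_nonneg (mul_nonneg (mul_nonneg ha.le ha.le) hU.le) hP1,
    mul_nonneg (mul_nonneg ha.le hs.le) hP1,
    mul_nonneg (mul_nonneg ha.le hs.le) (sub_nonneg.mpr hCS)]
end
end

section
/- Let (Ω, P) be a probability space, θ ∈ ℂ with θ ≠ 0, σ_u ≥ 0, σ_e ≥ 0. Let u, e be complex-valued random variables that are independent, with E[u] = 0, E[e] = 0, E[|u|²] = σ_u², E[|e|²] = σ_e², and let θ̂ be a complex-valued random variable independent of the pair (u, e) with θ̂ ≠ 0 almost surely. Then, as an identity in [0, ∞] (extended nonnegative reals), E[ |(θ u + e)/θ̂ − (θ u + e)/θ|² ] = E[ |(θ̂ − θ)/θ̂|² ] * (σ_u² + σ_e² / |θ|²). -/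
open MeasureTheory ProbabilityTheory

/-- Identity (12) of the paper, stated in the extended nonnegative reals: the excess
MSE of the ZF input estimator factorizes as
`E[|(θu+e)/θ̂ − (θu+e)/θ|²] = E[|(θ̂−θ)/θ̂|²] (σu² + σe²/|θ|²)`,
where `u` (input) and `e` (noise) are independent zero-mean with powers `σu²`, `σe²`,
and the system estimate `θ̂` is independent of the pair `(u, e)` and a.s. nonzero. -/
theorem excess_mse_factorization
    {Ω : Type*} [MeasurableSpace Ω] (P : Measure Ω) [IsProbabilityMeasure P]
    (θ : ℂ) (hθ : θ ≠ 0) (σu σe : ℝ) (hσu : 0 ≤ σu) (hσe : 0 ≤ σe)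
    (u e θhat : Ω → ℂ)
    (hu2 : MemLp u 2 P) (he2 : MemLp e 2 P) (hθhat : AEMeasurable θhat P)
    (hue : IndepFun u e P)
    (hθue : IndepFun θhat (fun ω => (u ω, e ω)) P)
    (huMean : ∫ ω, u ω ∂P = 0) (heMean : ∫ ω, e ω ∂P = 0)
    (huVar : ∫ ω, ‖u ω‖ ^ 2 ∂P = σu ^ 2)
    (heVar : ∫ ω, ‖e ω‖ ^ 2 ∂P = σe ^ 2)
    (hθhatNe : ∀ᵐ ω ∂P, θhat ω ≠ 0) :
    ∫⁻ ω, ENNReal.ofReal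
        (‖(θ * u ω + e ω) / θhat ω - (θ * u ω + e ω) / θ‖ ^ 2) ∂P
      = (∫⁻ ω, ENNReal.ofReal (‖(θhat ω - θ) / θhat ω‖ ^ 2) ∂P)
        * ENNReal.ofReal (σu ^ 2 + σe ^ 2 / ‖θ‖ ^ 2) := by
  have habs : ‖θ‖ ≠ 0 := by simpa using hθ
  -- some basic integrability
  have hθu2 : MemLp (fun ω => θ * u ω) 2 P := hu2.const_mul θ
  have hsum2 : MemLp (fun ω => θ * u ω + e ω) 2 P := hθu2.add he2
  have hu1 : Integrable u P := hu2.integrable one_le_two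
  have he1 : Integrable e P := he2.integrable one_le_two
  have hθu1 : Integrable (fun ω => θ * u ω) P := hu1.const_mul θ
  -- functions in the factorization
  set f : Ω → ENNReal := fun ω => ENNReal.ofReal (‖((θhat ω - θ) / θhat ω)‖ ^ 2) with hf
  set g : Ω → ENNReal := fun ω =>
    ENNReal.ofReal (‖(θ * u ω + e ω)‖ ^ 2 / ‖θ‖ ^ 2) with hg
  -- step 1: the integrand factorizes a.e.
  have step1 : ∫⁻ ω, ENNReal.ofReal
      (‖((θ * u ω + e ω) / θhat ω - (θ * u ω + e ω) / θ)‖ ^ 2) ∂P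
      = ∫⁻ ω, f ω * g ω ∂P := by
    refine lintegral_congr_ae ?_
    filter_upwards [hθhatNe] with ω hω
    have hz : (θ * u ω + e ω) / θhat ω - (θ * u ω + e ω) / θ
        = -(((θhat ω - θ) / θhat ω) * ((θ * u ω + e ω) / θ)) := by
      field_simp
      ring
    rw [hz, norm_neg, norm_mul, mul_pow, ← ENNReal.ofReal_mul (by positivity)]
    congr 1
    simp only [norm_div, div_pow]
  -- step 2: independence gives factorization of the integral
  have hdiv : Measurable fun z : ℂ => (z - θ) / z := by
    simp only [div_eq_mul_inv]
    exact (measurable_id.sub_const θ).mul measurable_inv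
  have hφ : Measurable fun z : ℂ => ENNReal.ofReal (‖((z - θ) / z)‖ ^ 2) :=
    ENNReal.measurable_ofReal.comp
      (((continuous_norm.measurable.comp hdiv)).pow_const 2)
  have hψ : Measurable fun p : ℂ × ℂ =>
      ENNReal.ofReal (‖(θ * p.1 + p.2)‖ ^ 2 / ‖θ‖ ^ 2) := by
    refine Continuous.measurable ?_
    exact ENNReal.continuous_ofReal.comp
      (((continuous_norm.comp
        ((continuous_const.mul continuous_fst).add continuous_snd)).pow 2).div_const _)
  have hindep : IndepFun f g P := hθue.comp hφ hψ
  have hfm : AEMeasurable f P := hφ.comp_aemeasurable hθhat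
  have hgm : AEMeasurable g P := by
    have := hψ.comp_aemeasurable
      (hu2.aestronglyMeasurable.aemeasurable.prodMk he2.aestronglyMeasurable.aemeasurable)
    exact this
  have step2 : ∫⁻ ω, f ω * g ω ∂P = (∫⁻ ω, f ω ∂P) * ∫⁻ ω, g ω ∂P :=
    lintegral_mul_eq_lintegral_mul_lintegral_of_indepFun'' hfm hgm hindep
  -- step 3: compute ∫⁻ g
  -- cross term vanishes
  have hAint : Integrable (fun ω => (θ * u ω).re) P := hθu1.re
  have hBint : Integrable (fun ω => (θ * u ω).im) P := hθu1.im
  have hCint : Integrable (fun ω => (e ω).re) P := he1.re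
  have hDint : Integrable (fun ω => (e ω).im) P := he1.im
  have hθuMean : ∫ ω, θ * u ω ∂P = 0 := by
    rw [integral_const_mul, huMean, mul_zero]
  have hAmean : ∫ ω, (θ * u ω).re ∂P = 0 := by
    have := integral_re hθu1 (μ := P)
    simpa [hθuMean] using this
  have hBmean : ∫ ω, (θ * u ω).im ∂P = 0 := by
    have := integral_im hθu1 (μ := P)
    simpa [hθuMean] using this
  have hAC : IndepFun (fun ω => (θ * u ω).re) (fun ω => (e ω).re) P :=
    hue.comp (Complex.measurable_re.comp (measurable_const_mul θ)) Complex.measurable_re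
  have hBD : IndepFun (fun ω => (θ * u ω).im) (fun ω => (e ω).im) P :=
    hue.comp (Complex.measurable_im.comp (measurable_const_mul θ)) Complex.measurable_im
  have hACint : ∫ ω, (θ * u ω).re * (e ω).re ∂P = 0 := by
    have h := hAC.integral_mul_eq_mul_integral hAint.1 hCint.1
    have h2 : ∫ ω, (θ * u ω).re * (e ω).re ∂P
        = integral P ((fun ω => (θ * u ω).re) * fun ω => (e ω).re) := rfl
    rw [h2, h, hAmean, zero_mul]
  have hBDint : ∫ ω, (θ * u ω).im * (e ω).im ∂P = 0 := by
    have h := hBD.integral_mul_eq_mul_integral hBint.1 hDint.1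
    have h2 : ∫ ω, (θ * u ω).im * (e ω).im ∂P
        = integral P ((fun ω => (θ * u ω).im) * fun ω => (e ω).im) := rfl
    rw [h2, h, hBmean, zero_mul]
  -- integrability of squared norms
  have hu2i : Integrable (fun ω => ‖(u ω)‖ ^ 2) P := by
    have := hu2.norm.integrable_sq
    simpa using this
  have he2i : Integrable (fun ω => ‖(e ω)‖ ^ 2) P := by
    have := he2.norm.integrable_sq
    simpa using this
  have hsumi : Integrable (fun ω => ‖(θ * u ω + e ω)‖ ^ 2) P := by
    have := hsum2.norm.integrable_sq
    simpa using this
  have h1cross : Integrable (fun ω => (θ * u ω).re * (e ω).re) P :=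
    hAC.integrable_mul hAint hCint
  have h2cross : Integrable (fun ω => (θ * u ω).im * (e ω).im) P :=
    hBD.integrable_mul hBint hDint
  have hcrossint : Integrable
      (fun ω => (θ * u ω).re * (e ω).re + (θ * u ω).im * (e ω).im) P :=
    h1cross.add h2cross
  -- expansion of |θu+e|²
  have hexp : ∀ ω, ‖(θ * u ω + e ω)‖ ^ 2
      = ‖θ‖ ^ 2 * ‖(u ω)‖ ^ 2 + ‖(e ω)‖ ^ 2
        + 2 * ((θ * u ω).re * (e ω).re + (θ * u ω).im * (e ω).im) := by
    intro ω
    rw [Complex.sq_norm, Complex.normSq_add, Complex.sq_norm, Complex.sq_norm,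
      Complex.sq_norm, ← Complex.normSq_mul]
    simp [Complex.mul_re, Complex.conj_re, Complex.conj_im]
  have hIsum : ∫ ω, ‖(θ * u ω + e ω)‖ ^ 2 ∂P
      = ‖θ‖ ^ 2 * σu ^ 2 + σe ^ 2 := by
    have : ∫ ω, ‖(θ * u ω + e ω)‖ ^ 2 ∂P
        = ∫ ω, (‖θ‖ ^ 2 * ‖(u ω)‖ ^ 2 + ‖(e ω)‖ ^ 2
          + 2 * ((θ * u ω).re * (e ω).re + (θ * u ω).im * (e ω).im)) ∂P :=
      integral_congr_ae (Filter.Eventually.of_forall fun ω => hexp ω)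
    have i1 : Integrable (fun ω => ‖θ‖ ^ 2 * ‖(u ω)‖ ^ 2) P :=
      hu2i.const_mul (‖θ‖ ^ 2)
    have i12 : Integrable (fun ω =>
        ‖θ‖ ^ 2 * ‖(u ω)‖ ^ 2 + ‖(e ω)‖ ^ 2) P := i1.add he2i
    have icross : Integrable (fun ω =>
        2 * ((θ * u ω).re * (e ω).re + (θ * u ω).im * (e ω).im)) P := hcrossint.const_mul 2
    rw [this, integral_add i12 icross, integral_add i1 he2i, integral_const_mul,
      integral_const_mul, huVar, heVar, integral_add h1cross h2cross, hACint, hBDint]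
    ring
  have step3 : ∫⁻ ω, g ω ∂P = ENNReal.ofReal (σu ^ 2 + σe ^ 2 / ‖θ‖ ^ 2) := by
    rw [hg, ← ofReal_integral_eq_lintegral_ofReal (hsumi.div_const _)
      (Filter.Eventually.of_forall fun ω => by positivity)]
    congr 1
    rw [integral_div, hIsum]
    field_simp
  rw [step1, step2, step3]
end

section
/- Let (Ω, P) be a probability space, λ > 0, and let X, Y be real-valued random variables such that X is integrable, Y is integrable, and Y ≥ λ² almost surely. Then E[Y] ≥ λ² > 0, X/Y is integrable, and |E[X/Y] − E[X]/E[Y]| ≤ (1/λ⁴) * E[ |X * E[Y] − Y * E[X]| ]. -/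
open MeasureTheory

/-- Inequality (22) of the Appendix: if `Y ≥ λ²` a.s. and `X`, `Y` are integrable,
then `E[Y] ≥ λ² > 0`, `X/Y` is integrable, and
`|E[X/Y] − E[X]/E[Y]| ≤ λ⁻⁴ E[|X E[Y] − Y E[X]|]`. -/
theorem mean_of_ratio_vs_ratio_of_means
    {Ω : Type*} [MeasurableSpace Ω] (P : Measure Ω) [IsProbabilityMeasure P]
    (lam : ℝ) (hlam : 0 < lam) (X Y : Ω → ℝ)
    (hX : Integrable X P) (hY : Integrable Y P)
    (hYlb : ∀ᵐ ω ∂P, lam ^ 2 ≤ Y ω) :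
    lam ^ 2 ≤ ∫ ω, Y ω ∂P ∧ 0 < ∫ ω, Y ω ∂P ∧
      Integrable (fun ω => X ω / Y ω) P ∧
      |(∫ ω, X ω / Y ω ∂P) - (∫ ω, X ω ∂P) / (∫ ω, Y ω ∂P)|
        ≤ (1 / lam ^ 4) *
          ∫ ω, |X ω * (∫ ω', Y ω' ∂P) - Y ω * (∫ ω', X ω' ∂P)| ∂P := by
  have hl2 : (0:ℝ) < lam ^ 2 := pow_pos hlam 2
  have hl4 : (0:ℝ) < lam ^ 4 := pow_pos hlam 4
  set EX := ∫ ω, X ω ∂P with hEXdef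
  set EY := ∫ ω, Y ω ∂P with hEYdef
  have hEY : lam ^ 2 ≤ EY := by
    have := integral_mono_ae (integrable_const (lam ^ 2)) hY hYlb
    simpa using this
  have hEYpos : 0 < EY := lt_of_lt_of_le hl2 hEY
  have hInt : Integrable (fun ω => X ω / Y ω) P := by
    refine Integrable.mono' (hX.norm.const_mul ((lam ^ 2)⁻¹)) ((hX.aemeasurable.div hY.aemeasurable).aestronglyMeasurable) ?_
    filter_upwards [hYlb] with ω hω
    have hYpos : 0 < Y ω := lt_of_lt_of_le hl2 hω
    rw [norm_div, Real.norm_eq_abs, Real.norm_eq_abs, abs_of_pos hYpos]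
    rw [div_le_iff₀ hYpos]
    calc |X ω| = (lam ^ 2)⁻¹ * |X ω| * lam ^ 2 := by field_simp
      _ ≤ (lam ^ 2)⁻¹ * |X ω| * Y ω := by
          apply mul_le_mul_of_nonneg_left hω
          positivity
  refine ⟨hEY, hEYpos, hInt, ?_⟩
  have hg : Integrable (fun ω => X ω * EY - Y ω * EX) P :=
    (hX.mul_const EY).sub (hY.mul_const EX)
  have hptwise : ∀ᵐ ω ∂P,
      |X ω / Y ω - EX / EY| ≤ (1 / lam ^ 4) * |X ω * EY - Y ω * EX| := by
    filter_upwards [hYlb] with ω hω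
    have hYpos : 0 < Y ω := lt_of_lt_of_le hl2 hω
    have hid : X ω / Y ω - EX / EY = (X ω * EY - Y ω * EX) / (Y ω * EY) := by
      field_simp
    rw [hid, abs_div, abs_of_pos (mul_pos hYpos hEYpos), one_div, div_eq_inv_mul]
    apply mul_le_mul_of_nonneg_right _ (abs_nonneg _)
    apply inv_anti₀ hl4
    calc lam ^ 4 = lam ^ 2 * lam ^ 2 := by ring
      _ ≤ Y ω * EY := mul_le_mul hω hEY hl2.le hYpos.le
  calc |(∫ ω, X ω / Y ω ∂P) - EX / EY|
      = |∫ ω, (X ω / Y ω - EX / EY) ∂P| := by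
        rw [integral_sub hInt (integrable_const _), integral_const]
        simp
    _ ≤ ∫ ω, |X ω / Y ω - EX / EY| ∂P := by
        simpa using norm_integral_le_integral_norm (fun ω => X ω / Y ω - EX / EY) (μ := P)
    _ ≤ ∫ ω, (1 / lam ^ 4) * |X ω * EY - Y ω * EX| ∂P := by
        exact integral_mono_ae (hInt.sub (integrable_const _)).abs
          (hg.abs.const_mul _) hptwise
    _ = (1 / lam ^ 4) * ∫ ω, |X ω * EY - Y ω * EX| ∂P := by
        rw [integral_const_mul]
end
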